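/- Off-diagonal Gram perturbation bound: if E_k = [e_1 … e_k] has columns satisfying ‖e_i‖₂² ≤ 1+α and |e_i^T e_j| ≤ (1+α)μ(S_i,S_j) for i ≠ j (with e_i ∈ S_i), then writing E_k^T E_k = I_k + D one has ‖D‖_{1,1} ≤ α + (1+α)ζ_{k−1}, where ζ_{k−1} is the (k−1)-cumulative subspace coherence. -/

import Mathlib

open scoped BigOperators

/-! Column `j` of `D` has diagonal entry `‖e_j‖² - 1 ∈ [-α, α]` and off-diagonal entries
`|⟪e_i, e_j⟫| ≤ (1 + α) μ(S_j, S_i)`; the latter range over the `k - 1` indices `i ≠ j` of `Λ`,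
so their coherences sum to at most `ζ_{k-1}`. -/

/-- The subspace coherence of two subspaces of `R^D`. -/
noncomputable def subCoh {D : ℕ} (S T : Submodule ℝ (EuclideanSpace ℝ (Fin D))) : ℝ :=
  sSup {r : ℝ | ∃ x ∈ S, ∃ z ∈ T, x ≠ 0 ∧ z ≠ 0 ∧ r = |(inner ℝ x z : ℝ)| / (‖x‖ * ‖z‖)}

/-- The `k`-cumulative subspace coherence `ζ_k` of a collection of subspaces. -/
noncomputable def zeta {D n : ℕ} (S : Fin n → Submodule ℝ (EuclideanSpace ℝ (Fin D)))
    (k : ℕ) : ℝ :=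
  sSup {r : ℝ | ∃ (Λ : Finset (Fin n)) (i : Fin n),
    Λ.card = k ∧ i ∉ Λ ∧ r = ∑ j ∈ Λ, subCoh (S i) (S j)}

/-- The mutual subspace coherence `μ_S` of a collection of subspaces. -/
noncomputable def muS {D n : ℕ} (S : Fin n → Submodule ℝ (EuclideanSpace ℝ (Fin D))) : ℝ :=
  sSup {r : ℝ | ∃ i j : Fin n, i ≠ j ∧ r = subCoh (S i) (S j)}

/-- The `ℓ₁`-induced operator norm of a matrix: the maximum column `ℓ₁` norm. -/
noncomputable def norm11 {α β : Type*} [Fintype α] (M : Matrix α β ℝ) : ℝ :=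
  sSup {r : ℝ | ∃ j : β, r = ∑ i, |M i j|}

lemma subCoh_nonneg {D : ℕ} (S T : Submodule ℝ (EuclideanSpace ℝ (Fin D))) :
    0 ≤ subCoh S T := by
  apply Real.sSup_nonneg
  rintro r ⟨x, -, z, -, -, -, rfl⟩
  positivity

lemma subCoh_comm {D : ℕ} (S T : Submodule ℝ (EuclideanSpace ℝ (Fin D))) :
    subCoh S T = subCoh T S := by
  unfold subCoh
  congr 1
  ext r
  constructor <;> rintro ⟨x, hx, z, hz, hx0, hz0, rfl⟩ <;>
    exact ⟨z, hz, x, hx, hz0, hx0, by rw [real_inner_comm, mul_comm]⟩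

section Zeta

variable {D n : ℕ} (S : Fin n → Submodule ℝ (EuclideanSpace ℝ (Fin D)))

lemma zeta_bddAbove (k : ℕ) :
    BddAbove {r : ℝ | ∃ (Λ : Finset (Fin n)) (i : Fin n),
      Λ.card = k ∧ i ∉ Λ ∧ r = ∑ j ∈ Λ, subCoh (S i) (S j)} := by
  refine (Set.finite_range
    fun p : Finset (Fin n) × Fin n => ∑ j ∈ p.1, subCoh (S p.2) (S j)).subset ?_ |>.bddAbove
  rintro r ⟨Λ, i, -, -, rfl⟩
  exact ⟨(Λ, i), rfl⟩

lemma zeta_nonneg (k : ℕ) : 0 ≤ zeta S k := by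
  apply Real.sSup_nonneg
  rintro r ⟨Λ, i, -, -, rfl⟩
  exact Finset.sum_nonneg fun j _ => subCoh_nonneg _ _

lemma sum_subCoh_le_zeta {k : ℕ} {Λ : Finset (Fin n)} {i : Fin n}
    (hcard : Λ.card = k) (hi : i ∉ Λ) :
    ∑ j ∈ Λ, subCoh (S i) (S j) ≤ zeta S k :=
  le_csSup (zeta_bddAbove S k) ⟨Λ, i, hcard, hi, rfl⟩

end Zeta

lemma norm11_le {α β : Type*} [Fintype α] {M : Matrix α β ℝ} {c : ℝ} (hc : 0 ≤ c)
    (h : ∀ j, ∑ i, |M i j| ≤ c) : norm11 M ≤ c :=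
  Real.sSup_le (by rintro r ⟨j, rfl⟩; exact h j) hc

lemma sum_abs_sub_one_apply_eq {ι : Type*} [DecidableEq ι] (Λ : Finset ι) (G : ι → ι → ℝ)
    (j : Λ) :
    ∑ i : Λ, |(Matrix.of (fun i j : Λ => G i j) - 1) i j| =
      |G j j - 1| + ∑ i ∈ Λ.erase j, |G i j| := by
  have hentry : ∀ i : Λ, |(Matrix.of (fun i j : Λ => G i j) - 1) i j| =
      |G i j - if (i : ι) = j then 1 else 0| := fun i => by
    simp only [Matrix.sub_apply, Matrix.of_apply, Matrix.one_apply, Subtype.ext_iff]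
  rw [Finset.sum_congr rfl fun i _ => hentry i,
    Finset.sum_coe_sort Λ fun i => |G i j - if i = j then 1 else 0|,
    ← Finset.add_sum_erase _ _ j.2, if_pos rfl]
  congr 1
  exact Finset.sum_congr rfl fun i hi => by rw [if_neg (Finset.ne_of_mem_erase hi), sub_zero]

theorem gram_perturbation_bound_general {Dim n k : ℕ} (α : ℝ) (hα0 : 0 ≤ α)
    (S : Fin n → Submodule ℝ (EuclideanSpace ℝ (Fin Dim)))
    (Λ : Finset (Fin n)) (hΛ : Λ.card = k)
    (e : Fin n → EuclideanSpace ℝ (Fin Dim))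
    (hnorm : ∀ i ∈ Λ, 1 - α ≤ ‖e i‖ ^ 2 ∧ ‖e i‖ ^ 2 ≤ 1 + α)
    (hcross : ∀ i ∈ Λ, ∀ j ∈ Λ, i ≠ j →
      |(inner ℝ (e i) (e j) : ℝ)| ≤ (1 + α) * subCoh (S i) (S j)) :
    norm11 ((Matrix.of fun (i j : {i // i ∈ Λ}) => (inner ℝ (e i.1) (e j.1) : ℝ)) - 1) ≤
      α + (1 + α) * zeta S (k - 1) := by
  have hζ := zeta_nonneg S (k - 1)
  refine norm11_le (by positivity) fun j => ?_
  rw [sum_abs_sub_one_apply_eq Λ (fun i j => inner ℝ (e i) (e j)) j]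
  have hdiag : |(inner ℝ (e j) (e j) : ℝ) - 1| ≤ α := by
    rw [real_inner_self_eq_norm_sq, abs_sub_le_iff]
    constructor <;> linarith [hnorm j j.2]
  have hoff : ∑ i ∈ Λ.erase j, |(inner ℝ (e i) (e j) : ℝ)| ≤ (1 + α) * zeta S (k - 1) :=
    calc ∑ i ∈ Λ.erase j, |(inner ℝ (e i) (e j) : ℝ)|
        ≤ ∑ i ∈ Λ.erase j, (1 + α) * subCoh (S j) (S i) :=
          Finset.sum_le_sum fun i hi => subCoh_comm (S j) (S i) ▸
            hcross i (Finset.mem_of_mem_erase hi) j j.2 (Finset.ne_of_mem_erase hi)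
      _ ≤ (1 + α) * zeta S (k - 1) := by
          rw [← Finset.mul_sum]
          exact mul_le_mul_of_nonneg_left (sum_subCoh_le_zeta S
            (by rw [Finset.card_erase_of_mem j.2, hΛ]) (Finset.notMem_erase _ _)) (by linarith)
  linarith

/-- writing `E_kᵀE_k = I + D`, one has `‖D‖_{1,1} ≤ α + (1+α)ζ_{k−1}`. -/
theorem gram_perturbation_bound {Dim n k : ℕ} (α : ℝ) (hα0 : 0 ≤ α) (hα1 : α < 1)
    (S : Fin n → Submodule ℝ (EuclideanSpace ℝ (Fin Dim)))
    (Λ : Finset (Fin n)) (hΛ : Λ.card = k)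
    (e : Fin n → EuclideanSpace ℝ (Fin Dim))
    (he : ∀ i ∈ Λ, e i ∈ S i)
    (hnorm : ∀ i ∈ Λ, 1 - α ≤ ‖e i‖ ^ 2 ∧ ‖e i‖ ^ 2 ≤ 1 + α)
    (hcross : ∀ i ∈ Λ, ∀ j ∈ Λ, i ≠ j →
      |(inner ℝ (e i) (e j) : ℝ)| ≤ (1 + α) * subCoh (S i) (S j)) :
    norm11 ((Matrix.of fun (i j : {i // i ∈ Λ}) => (inner ℝ (e i.1) (e j.1) : ℝ)) - 1) ≤
      α + (1 + α) * zeta S (k - 1) :=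
  gram_perturbation_bound_general α hα0 S Λ hΛ e hnorm hcross
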